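/- Let G be a finite connected simple graph on n vertices, where n is even. If there exists a magnetic potential α on G such that λ_{n/2+1}(Δ_α^G) < 2, then G has no perfect matching. -/

import Mathlib

open Classical in
/-- The discrete magnetic Laplacian of a simple graph `G` on `Fin n` with magnetic
potential `α`. -/
noncomputable def magLap {n : ℕ} (G : SimpleGraph (Fin n)) (α : Fin n → Fin n → ℝ) :
    Matrix (Fin n) (Fin n) ℂ :=
  Matrix.of fun u v =>
    if u = v then ((G.neighborSet u).ncard : ℂ)
    else if G.Adj u v then -Complex.exp (α u v * Complex.I) else 0

lemma magLap_isHermitian {n : ℕ} (G : SimpleGraph (Fin n)) (α : Fin n → Fin n → ℝ)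
    (hα : ∀ u v, α v u = -α u v) : (magLap G α).IsHermitian := by
  rw [Matrix.IsHermitian]
  ext u v
  simp only [Matrix.conjTranspose_apply, magLap, Matrix.of_apply]
  by_cases huv : u = v
  · subst huv; simp
  · have hvu : ¬ v = u := fun h => huv h.symm
    rw [if_neg hvu, if_neg huv]
    by_cases hadj : G.Adj u v
    · rw [if_pos hadj.symm, if_pos hadj, star_neg]
      have h1 : star (Complex.exp ((α v u : ℂ) * Complex.I)) =
          Complex.exp ((starRingEnd ℂ) ((α v u : ℂ) * Complex.I)) :=
        (Complex.exp_conj _).symm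
      rw [h1]
      congr 1
      rw [hα u v]
      simp [map_mul, Complex.conj_ofReal, Complex.conj_I]
    · rw [if_neg (fun h => hadj h.symm), if_neg hadj, star_zero]

/-- The `k`-th smallest eigenvalue (1-indexed, with multiplicity) of a Hermitian
matrix, as an extended real number; `⊥` for `k = 0` and `⊤` for `k > n`. -/
noncomputable def lamb {n : ℕ} {A : Matrix (Fin n) (Fin n) ℂ} (hA : A.IsHermitian) (k : ℕ) :
    EReal :=
  if h : 1 ≤ k ∧ k ≤ n then
    (((hA.eigenvalues ∘ Tuple.sort hA.eigenvalues) ⟨k - 1, by omega⟩ : ℝ) : EReal)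
  else if k = 0 then ⊥ else ⊤

/-- The matching number of a graph: the maximal number of pairwise independent edges. -/
noncomputable def matchingNumber {n : ℕ} (G : SimpleGraph (Fin n)) : ℕ :=
  sSup {k : ℕ | ∃ M : G.Subgraph, M.IsMatching ∧ M.edgeSet.ncard = k}

/-!
A perfect matching is a fixed-point-free involution `σ` with `u ~ σ u`. The vectors with
`e^{iα(u,σ u)} x(σ u) = -x(u)` for all `u` form a space of dimension at least `n / 2`: as `α`
is antisymmetric, the conditions at `u` and at `σ u` coincide. For these vectors each matching
term `‖x u - e^{iα(u,σ u)} x(σ u)‖² = 4 ‖x u‖²` of the magnetic quadratic form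
`⟪x, Δ x⟫ = ½ ∑_{u ~ v} ‖x u - e^{iα(u,v)} x v‖²` already gives `⟪x, Δ x⟫ ≥ 2 ‖x‖²`. By the
min-max principle at most `n - n / 2` eigenvalues are then below `2`, so `λ_{n/2+1}(Δ) ≥ 2`.
-/

open Matrix Module Finset

namespace Matrix

variable {𝕜 ι : Type*} [RCLike 𝕜] [Fintype ι]

lemma re_star_dotProduct_self (x : ι → 𝕜) : RCLike.re (star x ⬝ᵥ x) = ∑ i, ‖x i‖ ^ 2 := by
  simp only [dotProduct, Pi.star_apply, RCLike.star_def, RCLike.conj_mul, map_sum]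
  simp only [← RCLike.ofReal_pow, RCLike.ofReal_re]

namespace IsHermitian

variable [DecidableEq ι] {A : Matrix ι ι 𝕜} (hA : A.IsHermitian)

lemma re_star_dotProduct_mulVec (x : ι → 𝕜) :
    RCLike.re (star x ⬝ᵥ (A *ᵥ x)) =
      ∑ i, hA.eigenvalues i * ‖(star (hA.eigenvectorUnitary : Matrix ι ι 𝕜) *ᵥ x) i‖ ^ 2 := by
  set U : Matrix ι ι 𝕜 := (hA.eigenvectorUnitary : Matrix ι ι 𝕜)
  have hU : star x ᵥ* U = star (star U *ᵥ x) := by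
    rw [star_mulVec, star_eq_conjTranspose, conjTranspose_conjTranspose]
  conv_lhs => rw [hA.spectral_theorem]
  rw [Unitary.conjStarAlgAut_apply, ← mulVec_mulVec, ← mulVec_mulVec, dotProduct_mulVec, hU]
  simp only [dotProduct, mulVec_diagonal, Pi.star_apply, RCLike.star_def, map_sum,
    Function.comp_apply]
  refine Finset.sum_congr rfl fun i _ => ?_
  rw [mul_left_comm, RCLike.conj_mul, ← RCLike.ofReal_pow, ← RCLike.ofReal_mul, RCLike.ofReal_re]

lemma sum_norm_sq_star_eigenvectorUnitary_mulVec (x : ι → 𝕜) :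
    ∑ i, ‖(star (hA.eigenvectorUnitary : Matrix ι ι 𝕜) *ᵥ x) i‖ ^ 2 = ∑ i, ‖x i‖ ^ 2 := by
  rw [← re_star_dotProduct_self, ← re_star_dotProduct_self, star_mulVec, ← star_eq_conjTranspose,
    star_star, ← dotProduct_mulVec, mulVec_mulVec,
    Unitary.mul_star_self_of_mem hA.eigenvectorUnitary.2, one_mulVec]

lemma eq_zero_of_star_eigenvectorUnitary_mulVec_eq_zero {c : ℝ} {x : ι → 𝕜}
    (hcx : c * ∑ i, ‖x i‖ ^ 2 ≤ RCLike.re (star x ⬝ᵥ (A *ᵥ x)))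
    (hx : ∀ i, c ≤ hA.eigenvalues i → (star (hA.eigenvectorUnitary : Matrix ι ι 𝕜) *ᵥ x) i = 0) :
    x = 0 := by
  set U : Matrix ι ι 𝕜 := (hA.eigenvectorUnitary : Matrix ι ι 𝕜)
  set y := star U *ᵥ x
  have hgap : ∑ i, (c - hA.eigenvalues i) * ‖y i‖ ^ 2 ≤ 0 := by
    rw [hA.re_star_dotProduct_mulVec, ← hA.sum_norm_sq_star_eigenvectorUnitary_mulVec,
      Finset.mul_sum] at hcx
    simpa [sub_mul] using hcx
  have hterm : ∀ i, 0 ≤ (c - hA.eigenvalues i) * ‖y i‖ ^ 2 := by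
    intro i
    by_cases hi : c ≤ hA.eigenvalues i
    · simp [hx i hi]
    · exact mul_nonneg (by linarith [not_le.mp hi]) (sq_nonneg _)
  have hzero := (Finset.sum_eq_zero_iff_of_nonneg fun i _ => hterm i).mp
    (le_antisymm hgap (Finset.sum_nonneg fun i _ => hterm i))
  have hy : y = 0 := by
    funext i
    by_cases hi : c ≤ hA.eigenvalues i
    · exact hx i hi
    · simpa [sub_eq_zero, (not_le.mp hi).ne'] using hzero i (Finset.mem_univ i)
  calc x = U *ᵥ y := by
        rw [mulVec_mulVec, Unitary.mul_star_self_of_mem hA.eigenvectorUnitary.2, one_mulVec]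
    _ = 0 := by rw [hy, mulVec_zero]

theorem finrank_add_card_eigenvalues_lt_le (W : Submodule 𝕜 (ι → 𝕜)) {c : ℝ}
    (hW : ∀ x ∈ W, c * ∑ i, ‖x i‖ ^ 2 ≤ RCLike.re (star x ⬝ᵥ (A *ᵥ x))) :
    finrank 𝕜 W + Fintype.card {i // hA.eigenvalues i < c} ≤ Fintype.card ι := by
  let P : W →ₗ[𝕜] ({i // c ≤ hA.eigenvalues i} → 𝕜) :=
    LinearMap.funLeft 𝕜 𝕜 Subtype.val ∘ₗ
      (star (hA.eigenvectorUnitary : Matrix ι ι 𝕜)).mulVecLin ∘ₗ W.subtype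
  have hP : Function.Injective P := by
    rw [← LinearMap.ker_eq_bot, LinearMap.ker_eq_bot']
    rintro ⟨x, hxW⟩ hPx
    exact Subtype.ext (hA.eq_zero_of_star_eigenvectorUnitary_mulVec_eq_zero (hW x hxW)
      fun i hi => congrFun hPx ⟨i, hi⟩)
  have hrank := LinearMap.finrank_le_finrank_of_injective hP
  have hcompl := Fintype.card_subtype_compl fun i => hA.eigenvalues i < c
  have hle := Fintype.card_subtype_le fun i => hA.eigenvalues i < c
  simp only [finrank_fintype_fun_eq_card, not_lt] at hrank hcompl
  omega

end IsHermitian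

end Matrix

lemma le_card_eigenvalues_lt_of_lamb_lt {n : ℕ} {A : Matrix (Fin n) (Fin n) ℂ}
    (hA : A.IsHermitian) {k : ℕ} {c : ℝ} (hk : 1 ≤ k) (h : lamb hA k < (c : EReal)) :
    k ≤ Fintype.card {i // hA.eigenvalues i < c} := by
  unfold lamb at h
  split_ifs at h with hkn
  · set μ := hA.eigenvalues
    set j : Fin n := ⟨k - 1, by omega⟩
    have hj : μ (Tuple.sort μ j) < c := by exact_mod_cast h
    calc k = #((Finset.Iic j).image (Tuple.sort μ)) := by
          rw [Finset.card_image_of_injective _ (Tuple.sort μ).injective, Fin.card_Iic]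
          exact (Nat.sub_add_cancel hk).symm
      _ ≤ #{i | μ i < c} := Finset.card_le_card fun i hi => by
          obtain ⟨i', hi', rfl⟩ := Finset.mem_image.mp hi
          exact Finset.mem_filter.mpr
            ⟨Finset.mem_univ _, (Tuple.monotone_sort μ (Finset.mem_Iic.mp hi')).trans_lt hj⟩
      _ = Fintype.card {i // μ i < c} := (Fintype.card_subtype _).symm
  · omega
  · exact absurd h (not_lt.mpr le_top)

section Pairing

variable {V : Type*} [LinearOrder V] (σ : V → V) (α : V → V → ℝ)

noncomputable def pairingConstraint : (V → ℂ) →ₗ[ℂ] ({u // u < σ u} → ℂ) where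
  toFun x u := x u + Complex.exp (α u (σ u) * Complex.I) * x (σ u)
  map_add' x y := by ext; simp only [Pi.add_apply]; ring
  map_smul' a x := by ext; simp only [Pi.smul_apply, smul_eq_mul, RingHom.id_apply]; ring

variable {σ α}

lemma exp_mul_apply_eq_neg_of_mem_ker_pairingConstraint (hσ : Function.Involutive σ)
    (hfix : ∀ u, σ u ≠ u) (hα : ∀ u v, α v u = -α u v) {x : V → ℂ}
    (hx : x ∈ LinearMap.ker (pairingConstraint σ α)) (u : V) :
    Complex.exp (α u (σ u) * Complex.I) * x (σ u) = -x u := by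
  have hker : ∀ w (hw : w < σ w), x w + Complex.exp (α w (σ w) * Complex.I) * x (σ w) = 0 :=
    fun w hw => congrFun (LinearMap.mem_ker.mp hx) ⟨w, hw⟩
  rcases lt_or_gt_of_ne (hfix u).symm with hlt | hgt
  · exact eq_neg_of_add_eq_zero_right (hker u hlt)
  · have h := hker (σ u) (by rwa [hσ u])
    rw [hσ u, hα] at h
    rw [eq_neg_of_add_eq_zero_left h, mul_neg, ← mul_assoc, ← Complex.exp_add]
    push_cast
    simp

lemma card_le_two_mul_finrank_ker_pairingConstraint [Fintype V] (hσ : Function.Involutive σ) :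
    Fintype.card V ≤ 2 * finrank ℂ (LinearMap.ker (pairingConstraint σ α)) := by
  have hnullity := LinearMap.finrank_range_add_finrank_ker (pairingConstraint σ α)
  have hrange := Submodule.finrank_le (LinearMap.range (pairingConstraint σ α))
  have hpairs : Fintype.card {u // u < σ u} ≤ Fintype.card {u // ¬ u < σ u} :=
    Fintype.card_le_of_injective (fun u => ⟨σ u.1, by rw [hσ]; exact u.2.not_gt⟩)
      fun u w h => Subtype.ext (hσ.injective (congrArg Subtype.val h))
  have hcompl := Fintype.card_subtype_compl (fun u => u < σ u)
  have hle := Fintype.card_subtype_le (fun u => u < σ u)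
  simp only [finrank_fintype_fun_eq_card] at hnullity hrange
  omega

end Pairing

lemma SimpleGraph.Subgraph.IsPerfectMatching.exists_involutive_adj {V : Type*}
    {G : SimpleGraph V} {M : G.Subgraph} (hM : M.IsPerfectMatching) :
    ∃ σ : V → V, Function.Involutive σ ∧ ∀ v, G.Adj v (σ v) := by
  choose σ hσ hσuniq using fun v => SimpleGraph.Subgraph.isPerfectMatching_iff.mp hM v
  exact ⟨σ, fun v => (hσuniq (σ v) v (hσ v).symm).symm, fun v => M.adj_sub (hσ v)⟩

section MagneticLaplacian

open Complex

variable {n : ℕ} (G : SimpleGraph (Fin n)) [DecidableRel G.Adj] (α : Fin n → Fin n → ℝ)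

lemma magLap_eq_diagonal_sub : magLap G α = diagonal (fun u => (G.degree u : ℂ)) -
    of fun u v => if G.Adj u v then exp (α u v * I) else 0 := by
  ext u v
  by_cases huv : u = v
  · subst huv
    simp [magLap, ← SimpleGraph.card_neighborSet_eq_degree, Set.ncard_eq_toFinset_card']
  · by_cases hadj : G.Adj u v <;> simp [magLap, huv, hadj]

lemma re_star_dotProduct_magLap_mulVec (x : Fin n → ℂ) :
    (star x ⬝ᵥ (magLap G α *ᵥ x)).re =
      (∑ u, ∑ v, if G.Adj u v then ‖x u - exp (α u v * I) * x v‖ ^ 2 else 0) / 2 := by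
  set r : Fin n → Fin n → ℝ := fun u v => (star (x u) * (exp (α u v * I) * x v)).re
  have hsq : ∀ u v, ‖x u - exp (α u v * I) * x v‖ ^ 2 = ‖x u‖ ^ 2 + ‖x v‖ ^ 2 - 2 * r u v := by
    intro u v
    rw [@norm_sub_sq ℂ, norm_mul, norm_exp_ofReal_mul_I, one_mul, RCLike.inner_apply,
      mul_comm (exp _ * x v)]
    simp only [r, RCLike.re_to_complex, RCLike.star_def]
    ring
  have hdiag : (star x ⬝ᵥ (diagonal (fun u => (G.degree u : ℂ)) *ᵥ x)).re =
      ∑ u, ∑ v, if G.Adj u v then ‖x u‖ ^ 2 else 0 := by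
    simp only [dotProduct, mulVec_diagonal, re_sum]
    refine Finset.sum_congr rfl fun u _ => ?_
    rw [mul_left_comm, Pi.star_apply, RCLike.star_def, conj_mul', ← ofReal_pow, ← ofReal_natCast,
      ← ofReal_mul, ofReal_re, G.degree_eq_sum_if_adj, Finset.sum_mul]
    simp only [ite_mul, one_mul, zero_mul]
  have hoff : (star x ⬝ᵥ ((of fun u v => if G.Adj u v then exp (α u v * I) else 0) *ᵥ x)).re =
      ∑ u, ∑ v, if G.Adj u v then r u v else 0 := by
    simp only [dotProduct, mulVec, of_apply, re_sum, Finset.mul_sum, ite_mul, zero_mul, mul_ite,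
      mul_zero, apply_ite re, zero_re, Pi.star_apply, r]
  have hswap : ∑ u, ∑ v, (if G.Adj u v then ‖x v‖ ^ 2 else 0) =
      ∑ u, ∑ v, if G.Adj u v then ‖x u‖ ^ 2 else 0 := by
    rw [Finset.sum_comm]
    simp_rw [G.adj_comm]
  have hsplit : ∀ u v, (if G.Adj u v then ‖x u‖ ^ 2 + ‖x v‖ ^ 2 - 2 * r u v else 0) =
      (if G.Adj u v then ‖x u‖ ^ 2 else 0) + (if G.Adj u v then ‖x v‖ ^ 2 else 0) -
        2 * if G.Adj u v then r u v else 0 := by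
    intro u v
    split_ifs <;> ring
  rw [magLap_eq_diagonal_sub, sub_mulVec, dotProduct_sub, sub_re, hdiag, hoff]
  simp_rw [hsq, hsplit, Finset.sum_sub_distrib, Finset.sum_add_distrib, ← Finset.mul_sum, hswap]
  ring

variable {G α}

lemma two_mul_sum_norm_sq_le_re_star_dotProduct_magLap_mulVec {σ : Fin n → Fin n}
    (hadj : ∀ u, G.Adj u (σ u)) {x : Fin n → ℂ}
    (hx : ∀ u, exp (α u (σ u) * I) * x (σ u) = -x u) :
    2 * ∑ u, ‖x u‖ ^ 2 ≤ (star x ⬝ᵥ (magLap G α *ᵥ x)).re := by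
  rw [re_star_dotProduct_magLap_mulVec]
  calc 2 * ∑ u, ‖x u‖ ^ 2 = (∑ u, ‖x u - exp (α u (σ u) * I) * x (σ u)‖ ^ 2) / 2 := by
        rw [Finset.mul_sum, Finset.sum_div]
        refine Finset.sum_congr rfl fun u _ => ?_
        rw [hx, sub_neg_eq_add, ← two_mul, norm_mul, RCLike.norm_ofNat]
        ring
    _ ≤ _ := by
        gcongr with u
        refine (if_pos (hadj u)).symm.trans_le (Finset.single_le_sum (f := fun v =>
          if G.Adj u v then ‖x u - exp (α u v * I) * x v‖ ^ 2 else 0) (fun v _ => ?_)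
          (Finset.mem_univ (σ u)))
        split_ifs <;> positivity

end MagneticLaplacian

theorem spectral_obstruction_matching_general {n : ℕ} (G : SimpleGraph (Fin n))
    (α : Fin n → Fin n → ℝ) (hα : ∀ u v, α v u = -α u v)
    (h : lamb (magLap_isHermitian G α hα) (n / 2 + 1) < ((2 : ℝ) : EReal)) :
    ¬ ∃ M : G.Subgraph, M.IsPerfectMatching := by
  classical
  rintro ⟨M, hM⟩
  obtain ⟨σ, hσ, hadj⟩ := hM.exists_involutive_adj
  set hA := magLap_isHermitian G α hα
  set W := LinearMap.ker (pairingConstraint σ α)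
  have hsmall : n / 2 + 1 ≤ Fintype.card {i // hA.eigenvalues i < 2} :=
    le_card_eigenvalues_lt_of_lamb_lt hA (Nat.le_add_left 1 _) h
  have hlarge : finrank ℂ W + Fintype.card {i // hA.eigenvalues i < 2} ≤ Fintype.card (Fin n) :=
    hA.finrank_add_card_eigenvalues_lt_le W fun x hx =>
      two_mul_sum_norm_sq_le_re_star_dotProduct_magLap_mulVec hadj
        (exp_mul_apply_eq_neg_of_mem_ker_pairingConstraint hσ (fun u => (hadj u).ne') hα hx)
  have hdim : Fintype.card (Fin n) ≤ 2 * finrank ℂ W :=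
    card_le_two_mul_finrank_ker_pairingConstraint hσ
  rw [Fintype.card_fin] at hlarge hdim
  omega

/-- If `G` is a connected graph on an even number `n` of vertices and
some magnetic potential `α` satisfies `λ_{n/2+1}(Δ_α^G) < 2`, then `G` has no perfect
matching. -/
theorem spectral_obstruction_matching {n : ℕ} (G : SimpleGraph (Fin n)) (hG : G.Connected)
    (hn : Even n) (α : Fin n → Fin n → ℝ) (hα : ∀ u v, α v u = -α u v)
    (h : lamb (magLap_isHermitian G α hα) (n / 2 + 1) < ((2 : ℝ) : EReal)) :
    ¬ ∃ M : G.Subgraph, M.IsPerfectMatching :=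
  spectral_obstruction_matching_general G α hα h
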